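/- Let G be a simple graph on [n]. Then J_G = ∩_{S ⊆ [n]} P_S(G), i.e., the binomial edge ideal equals the intersection over all subsets S of [n] of the prime ideals P_S(G). -/

import Mathlib

open MvPolynomial

/-- The binomial `f_{ab} = x_a y_b - x_b y_a` in `K[x_1,…,x_n,y_1,…,y_n]`. -/
noncomputable def edgeBinomial (K : Type*) [Field K] {n : ℕ} (a b : Fin n) :
    MvPolynomial (Fin n ⊕ Fin n) K :=
  X (Sum.inl a) * X (Sum.inr b) - X (Sum.inl b) * X (Sum.inr a)

/-- The binomial edge ideal `J_G` of a simple graph `G` on `[n]`. -/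
noncomputable def binomialEdgeIdeal (K : Type*) [Field K] {n : ℕ}
    (G : SimpleGraph (Fin n)) : Ideal (MvPolynomial (Fin n ⊕ Fin n) K) :=
  Ideal.span {p | ∃ i j : Fin n, G.Adj i j ∧ i < j ∧ p = edgeBinomial K i j}

/-- The prime ideal `P_S(G)`. -/
noncomputable def componentPrime (K : Type*) [Field K] {n : ℕ}
    (G : SimpleGraph (Fin n)) (S : Set (Fin n)) :
    Ideal (MvPolynomial (Fin n ⊕ Fin n) K) :=
  Ideal.span ({p | ∃ i ∈ S, p = X (Sum.inl i) ∨ p = X (Sum.inr i)} ∪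
    {p | ∃ a b : (Sᶜ : Set (Fin n)), (G.induce Sᶜ).Reachable a b ∧
      p = edgeBinomial K a.1 b.1})

/-!
Grade `K[x, y]` by `ℕⁿ` with `deg x_i = deg y_i = e_i`. Every `f_ij` of an edge lies in every
`P_S`. Conversely, each `P_S` is generated by homogeneous elements, so it suffices to show that
the degree-`u` component of an `f ∈ ⋂ P_S` lies in `J_G`, and for this one takes
`S = {i | u_i = 0}`. No degree-`u` multiple of `x_i` or `y_i` with `i ∈ S` exists, while a
degree-`u` monomial multiple of `f_ab`, for `a, b` joined by a path in `G` outside `S`, is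
divisible by `x_c` or `y_c` at every inner vertex `c` of the path; then
`x_c f_ab = x_a f_cb + x_b f_ac` lets one induct along the path.
-/

open scoped Pointwise

namespace MvPolynomial

theorem X_dvd_of_dvd_X_mul {σ R : Type*} [CommRing R] [IsDomain R] {i j : σ}
    {q : MvPolynomial σ R} (hij : i ≠ j) (h : X i ∣ X j * q) : X i ∣ q :=
  (X_prime.dvd_or_dvd h).resolve_left (mt X_dvd_X.1 hij)

variable {σ R M : Type*} [CommSemiring R] [AddCommMonoid M] {w : σ → M}

theorem weightedHomogeneousComponent_mem_of_mem_span {B : Set (MvPolynomial σ R)}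
    {I : Ideal (MvPolynomial σ R)} {m : M}
    (hB : ∀ b ∈ B, ∃ d, IsWeightedHomogeneous w b d ∧
      ∀ v, Finsupp.weight w v + d = m → monomial v 1 * b ∈ I)
    {f : MvPolynomial σ R} (hf : f ∈ Ideal.span B) :
    weightedHomogeneousComponent w m f ∈ I := by
  have hmon : Submodule.span R (Set.range fun v : σ →₀ ℕ => monomial v (1 : R)) = ⊤ := by
    rw [← coe_basisMonomials]; exact (basisMonomials σ R).span_eq
  rw [← Submodule.restrictScalars_mem R, Ideal.span,
    ← Submodule.span_smul_of_span_eq_top hmon] at hf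
  induction hf using Submodule.span_induction with
  | mem _ hx =>
    obtain ⟨_, ⟨v, rfl⟩, b, hb, rfl⟩ := hx
    obtain ⟨d, hd, hI⟩ := hB b hb
    have hvb := (isWeightedHomogeneous_monomial w v (1 : R) rfl).mul hd
    dsimp only [smul_eq_mul]
    by_cases hvd : Finsupp.weight w v + d = m
    · rw [← hvd, hvb.weightedHomogeneousComponent_same]
      exact hI v hvd
    · rw [hvb.weightedHomogeneousComponent_ne m (Ne.symm hvd)]
      exact I.zero_mem
  | zero => simp
  | add _ _ _ _ hx hy => rw [map_add]; exact I.add_mem hx hy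
  | smul r _ _ hx => rw [map_smul]; exact I.smul_of_tower_mem r hx

theorem mem_of_weightedHomogeneousComponent_mem {I : Ideal (MvPolynomial σ R)}
    {f : MvPolynomial σ R} (hf : ∀ m, weightedHomogeneousComponent w m f ∈ I) : f ∈ I := by
  rw [← finsum_weightedHomogeneousComponent w f]
  exact finsum_induction (· ∈ I) I.zero_mem (fun _ _ => I.add_mem) hf

end MvPolynomial

theorem SimpleGraph.Reachable.exists_isPath_of_induce {V : Type*} {G : SimpleGraph V}
    {s : Set V} {a b : s} (h : (G.induce s).Reachable a b) :
    ∃ p : G.Walk a b, p.IsPath ∧ ∀ c ∈ p.support, c ∈ s := by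
  classical
  obtain ⟨q⟩ := h
  refine ⟨q.toPath.1.map (Embedding.induce s).toHom,
    q.toPath.2.map Subtype.val_injective, fun c hc => ?_⟩
  obtain ⟨c', -, rfl⟩ := List.mem_map.1 (Walk.support_map _ _ ▸ hc)
  exact c'.2

def vertexWeight (n : ℕ) : Fin n ⊕ Fin n → Fin n → ℕ :=
  Sum.elim (Pi.single · 1) (Pi.single · 1)

theorem weight_vertexWeight_apply {n : ℕ} (v : Fin n ⊕ Fin n →₀ ℕ) (c : Fin n) :
    Finsupp.weight (vertexWeight n) v c = v (Sum.inl c) + v (Sum.inr c) := by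
  simp [Finsupp.weight_eq_sum, Fintype.sum_sum_type, vertexWeight, Pi.single_apply]

section BinomialEdgeIdeal

variable {K : Type*} [Field K] {n : ℕ}

theorem edgeBinomial_self (a : Fin n) : edgeBinomial K a a = 0 := by
  simp [edgeBinomial]

theorem edgeBinomial_swap (a b : Fin n) : edgeBinomial K b a = -edgeBinomial K a b := by
  simp only [edgeBinomial]; ring

theorem edgeBinomial_swap_mem_iff {I : Ideal (MvPolynomial (Fin n ⊕ Fin n) K)} {a b : Fin n} :
    edgeBinomial K b a ∈ I ↔ edgeBinomial K a b ∈ I := by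
  rw [edgeBinomial_swap, neg_mem_iff]

theorem X_mul_edgeBinomial {side : Fin n → Fin n ⊕ Fin n}
    (hside : side = Sum.inl ∨ side = Sum.inr) (a b d : Fin n) :
    X (side d) * edgeBinomial K a b
      = X (side a) * edgeBinomial K d b + X (side b) * edgeBinomial K a d := by
  rcases hside with rfl | rfl <;> simp only [edgeBinomial] <;> ring

theorem edgeBinomial_mem_binomialEdgeIdeal {G : SimpleGraph (Fin n)} {a b : Fin n}
    (h : G.Adj a b) : edgeBinomial K a b ∈ binomialEdgeIdeal K G := by
  rcases h.ne.lt_or_gt with hab | hba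
  · exact Ideal.subset_span ⟨a, b, h, hab, rfl⟩
  · exact edgeBinomial_swap_mem_iff.1 (Ideal.subset_span ⟨b, a, h.symm, hba, rfl⟩)

theorem isWeightedHomogeneous_edgeBinomial (a b : Fin n) :
    IsWeightedHomogeneous (vertexWeight n) (edgeBinomial K a b)
      (Pi.single a 1 + Pi.single b 1) := by
  have hX := isWeightedHomogeneous_X K (vertexWeight n)
  refine IsWeightedHomogeneous.sub ((hX _).mul (hX _)) ?_
  rw [add_comm]
  exact (hX _).mul (hX _)

theorem mul_edgeBinomial_mem_binomialEdgeIdeal {G : SimpleGraph (Fin n)} {a b : Fin n}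
    (p : G.Walk a b) (hp : p.IsPath) {m : MvPolynomial (Fin n ⊕ Fin n) K}
    (hm : ∀ c ∈ p.support, c ≠ a → c ≠ b →
      X (Sum.inl c) ∣ m ∨ X (Sum.inr c) ∣ m) :
    m * edgeBinomial K a b ∈ binomialEdgeIdeal K G := by
  induction p generalizing m with
  | nil => simp [edgeBinomial_self]
  | @cons a d b hadj p ih =>
    rw [SimpleGraph.Walk.cons_isPath_iff] at hp
    by_cases hdb : d = b
    · subst hdb
      exact Ideal.mul_mem_left _ _ (edgeBinomial_mem_binomialEdgeIdeal hadj)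
    obtain ⟨side, hside, m', rfl⟩ : ∃ side : Fin n → Fin n ⊕ Fin n,
        (side = Sum.inl ∨ side = Sum.inr) ∧ X (side d) ∣ m := by
      rcases hm d (by simp) hadj.ne.symm hdb with h | h
      exacts [⟨_, Or.inl rfl, h⟩, ⟨_, Or.inr rfl, h⟩]
    have hm' : ∀ c ∈ p.support, c ≠ d → c ≠ b →
        X (Sum.inl c) ∣ m' ∨ X (Sum.inr c) ∣ m' := by
      intro c hc hcd hcb
      have hca : c ≠ a := fun h => hp.2 (h ▸ hc)
      refine (hm c (by simp [hc]) hca hcb).imp (X_dvd_of_dvd_X_mul ?_) (X_dvd_of_dvd_X_mul ?_)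
        <;> rcases hside with rfl | rfl <;> simp [hcd]
    have hsplit : X (side d) * m' * edgeBinomial K a b
        = X (side a) * (m' * edgeBinomial K d b)
          + X (side b) * m' * edgeBinomial K a d := by
      linear_combination m' * X_mul_edgeBinomial (K := K) hside a b d
    rw [hsplit]
    exact Ideal.add_mem _ (Ideal.mul_mem_left _ _ (ih hp.1 hm'))
      (Ideal.mul_mem_left _ _ (edgeBinomial_mem_binomialEdgeIdeal hadj))

theorem edgeBinomial_mem_componentPrime_of_mem (G : SimpleGraph (Fin n)) {S : Set (Fin n)}
    {a : Fin n} (ha : a ∈ S) (b : Fin n) : edgeBinomial K a b ∈ componentPrime K G S := by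
  have hx : X (Sum.inl a) ∈ componentPrime K G S :=
    Ideal.subset_span (Or.inl ⟨a, ha, Or.inl rfl⟩)
  have hy : X (Sum.inr a) ∈ componentPrime K G S :=
    Ideal.subset_span (Or.inl ⟨a, ha, Or.inr rfl⟩)
  exact sub_mem (Ideal.mul_mem_right _ _ hx) (Ideal.mul_mem_left _ _ hy)

theorem binomialEdgeIdeal_le_componentPrime (G : SimpleGraph (Fin n)) (S : Set (Fin n)) :
    binomialEdgeIdeal K G ≤ componentPrime K G S := by
  refine Ideal.span_le.2 ?_
  rintro _ ⟨i, j, hij, -, rfl⟩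
  by_cases hi : i ∈ S
  · exact edgeBinomial_mem_componentPrime_of_mem G hi j
  by_cases hj : j ∈ S
  · rw [SetLike.mem_coe, ← edgeBinomial_swap_mem_iff]
    exact edgeBinomial_mem_componentPrime_of_mem G hj i
  · exact Ideal.subset_span
      (Or.inr ⟨⟨i, hi⟩, ⟨j, hj⟩, (SimpleGraph.induce_adj.2 hij).reachable, rfl⟩)

theorem weightedHomogeneousComponent_mem_binomialEdgeIdeal (G : SimpleGraph (Fin n))
    (u : Fin n → ℕ) {f : MvPolynomial (Fin n ⊕ Fin n) K}
    (hf : f ∈ componentPrime K G {i | u i = 0}) :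
    weightedHomogeneousComponent (vertexWeight n) u f ∈ binomialEdgeIdeal K G := by
  refine weightedHomogeneousComponent_mem_of_mem_span ?_ hf
  rintro _ (⟨i, hi, rfl | rfl⟩ | ⟨a, b, hab, rfl⟩)
  iterate 2
    refine ⟨_, isWeightedHomogeneous_X K _ _, fun v hv => absurd (congrFun hv i) ?_⟩
    simp_all [vertexWeight]
  · refine ⟨_, isWeightedHomogeneous_edgeBinomial a.1 b.1, fun v hv => ?_⟩
    obtain ⟨p, hp, hpS⟩ := hab.exists_isPath_of_induce
    refine mul_edgeBinomial_mem_binomialEdgeIdeal p hp fun c hc hca hcb => ?_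
    have huc : u c ≠ 0 := hpS c hc
    have hvc : v (Sum.inl c) + v (Sum.inr c) = u c := by
      simpa [weight_vertexWeight_apply, hca, hcb] using congrFun hv c
    simp only [X_dvd_monomial, one_ne_zero, false_or]
    omega

end BinomialEdgeIdeal

/-- `J_G` is the intersection of the prime ideals `P_S(G)` over all subsets `S ⊆ [n]`. -/
theorem binomialEdgeIdeal_eq_iInf_componentPrime (K : Type*) [Field K] {n : ℕ}
    (G : SimpleGraph (Fin n)) :
    binomialEdgeIdeal K G = ⨅ S : Set (Fin n), componentPrime K G S := by
  refine le_antisymm (le_iInf (binomialEdgeIdeal_le_componentPrime G)) fun f hf => ?_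
  exact mem_of_weightedHomogeneousComponent_mem fun u =>
    weightedHomogeneousComponent_mem_binomialEdgeIdeal G u (Ideal.mem_iInf.1 hf _)
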